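/- For every integer d ≥ 3, the integral ∫₀^∞ [I₀(x/d)]^d e^{−x} dx is equal to the Lauricella series F_C^{(d)}(1, 1/2; 1, …, 1; 1/d², …, 1/d²), i.e. ∫₀^∞ (∑_{k≥0} (x/(2d))^{2k}/(k!)²)^d e^{−x} dx = ∑_{k₁≥0} ⋯ ∑_{k_d≥0} (1)_{k₁+⋯+k_d} (1/2)_{k₁+⋯+k_d} / ((k₁)!² ⋯ (k_d)!² · d^{2(k₁+⋯+k_d)}), where both sides are finite. -/

import Mathlib

/-!
Expanding `I₀(x/d)^d` as a `d`-fold power series with nonnegative terms and integrating term by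
term against `e^{-x}`, using `∫₀^∞ x^{2n} e^{-x} dx = (2n)!` and `(1)ₙ (1/2)ₙ = (2n)! / 4ⁿ`, gives
the Lauricella series. Term-by-term integration is legitimate as soon as the integral is finite.
Finiteness comes from `I₀(t) ≤ 4 eᵗ / √t`, which follows from `binom(2k, k) ≤ 4ᵏ / √(2k+1)`:
the integrand is then `O(x^{-d/2})`, integrable at infinity because `d ≥ 3`.
-/

open MeasureTheory Real Finset

/-- The modified Bessel function of the first kind of order zero,
`I₀(x) = ∑_{k ≥ 0} (x/2)^{2k} / (k!)²`. -/
noncomputable def besselI0 (x : ℝ) : ℝ :=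
  ∑' k : ℕ, (x / 2) ^ (2 * k) / ((k.factorial : ℝ)) ^ 2

lemma Nat.centralBinom_sq_mul_le (k : ℕ) : k.centralBinom ^ 2 * (2 * k + 1) ≤ 16 ^ k := by
  induction k with
  | zero => simp
  | succ k ih =>
    have hrec := Nat.succ_mul_centralBinom_succ k
    have hk : 4 * (2 * k + 1) * (2 * k + 3) ≤ 16 * (k + 1) ^ 2 := by nlinarith
    refine Nat.le_of_mul_le_mul_left ?_ (by positivity : 0 < (k + 1) ^ 2)
    calc (k + 1) ^ 2 * ((k + 1).centralBinom ^ 2 * (2 * (k + 1) + 1))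
        = 4 * (2 * k + 1) * (2 * k + 3) * (k.centralBinom ^ 2 * (2 * k + 1)) := by
          rw [← mul_assoc, ← mul_pow, hrec]; ring
      _ ≤ 16 * (k + 1) ^ 2 * 16 ^ k := Nat.mul_le_mul hk ih
      _ = (k + 1) ^ 2 * 16 ^ (k + 1) := by ring

lemma Nat.centralBinom_mul_sqrt_le (k : ℕ) :
    (k.centralBinom : ℝ) * √(2 * k + 1) ≤ 4 ^ k := by
  refine (pow_le_pow_iff_left₀ (by positivity) (by positivity) two_ne_zero).1 ?_
  rw [mul_pow, Real.sq_sqrt (by positivity), ← pow_mul, mul_comm k 2, pow_mul]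
  exact_mod_cast Nat.centralBinom_sq_mul_le k

lemma besselI0_term_eq_centralBinom_mul (t : ℝ) (k : ℕ) :
    (t / 2) ^ (2 * k) / (k.factorial : ℝ) ^ 2 =
      k.centralBinom * ((t / 2) ^ (2 * k) / (2 * k).factorial) := by
  have h := Nat.choose_mul_factorial_mul_factorial (show k ≤ 2 * k by omega)
  rw [show 2 * k - k = k by omega] at h
  have hc : ((2 * k).choose k : ℝ) ≠ 0 := Nat.cast_ne_zero.2 (Nat.centralBinom_ne_zero k)
  rw [Nat.centralBinom, ← h]
  push_cast
  field_simp

lemma pow_two_mul_div_factorial_nonneg (t : ℝ) (k : ℕ) :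
    0 ≤ t ^ (2 * k) / (2 * k).factorial :=
  div_nonneg ((even_two_mul k).pow_nonneg _) (by positivity)

lemma besselI0_term_nonneg (t : ℝ) (k : ℕ) : 0 ≤ (t / 2) ^ (2 * k) / (k.factorial : ℝ) ^ 2 :=
  div_nonneg ((even_two_mul k).pow_nonneg _) (by positivity)

lemma besselI0_term_le_four_pow_mul {t : ℝ} {k K : ℕ} (hk : k ≤ K) :
    (t / 2) ^ (2 * k) / (k.factorial : ℝ) ^ 2 ≤
      4 ^ K * ((t / 2) ^ (2 * k) / (2 * k).factorial) := by
  rw [besselI0_term_eq_centralBinom_mul]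
  gcongr
  · exact pow_two_mul_div_factorial_nonneg _ k
  · calc (k.centralBinom : ℝ) ≤ 4 ^ k := by exact_mod_cast Nat.centralBinom_le_four_pow k
      _ ≤ 4 ^ K := pow_le_pow_right₀ (by norm_num) hk

lemma besselI0_term_le_div_sqrt (t : ℝ) (k : ℕ) :
    (t / 2) ^ (2 * k) / (k.factorial : ℝ) ^ 2 ≤
      t ^ (2 * k) / (2 * k).factorial / √(2 * k + 1) := by
  have h4 : (4 : ℝ) ^ k * (t / 2) ^ (2 * k) = t ^ (2 * k) := by
    rw [pow_mul, pow_mul, ← mul_pow]; ring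
  rw [besselI0_term_eq_centralBinom_mul, ← h4, le_div_iff₀ (by positivity)]
  calc k.centralBinom * ((t / 2) ^ (2 * k) / (2 * k).factorial) * √(2 * k + 1)
      = k.centralBinom * √(2 * k + 1) * ((t / 2) ^ (2 * k) / (2 * k).factorial) := by ring
    _ ≤ 4 ^ k * ((t / 2) ^ (2 * k) / (2 * k).factorial) := by
      gcongr
      · exact pow_two_mul_div_factorial_nonneg _ k
      · exact Nat.centralBinom_mul_sqrt_le k
    _ = 4 ^ k * (t / 2) ^ (2 * k) / (2 * k).factorial := by ring

lemma besselI0_term_le_cosh_term (t : ℝ) (k : ℕ) :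
    (t / 2) ^ (2 * k) / (k.factorial : ℝ) ^ 2 ≤ t ^ (2 * k) / (2 * k).factorial := by
  refine (besselI0_term_le_div_sqrt t k).trans
    (div_le_self (pow_two_mul_div_factorial_nonneg t k) (Real.one_le_sqrt.2 ?_))
  linarith [(k.cast_nonneg : (0 : ℝ) ≤ k)]

lemma hasSum_besselI0 (t : ℝ) :
    HasSum (fun k : ℕ => (t / 2) ^ (2 * k) / (k.factorial : ℝ) ^ 2) (besselI0 t) :=
  (Summable.of_nonneg_of_le (besselI0_term_nonneg t) (besselI0_term_le_cosh_term t)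
    (Real.hasSum_cosh t).summable).hasSum

lemma besselI0_nonneg (t : ℝ) : 0 ≤ besselI0 t := tsum_nonneg (besselI0_term_nonneg t)

lemma besselI0_le_cosh (t : ℝ) : besselI0 t ≤ Real.cosh t :=
  hasSum_le (besselI0_term_le_cosh_term t) (hasSum_besselI0 t) (Real.hasSum_cosh t)

@[fun_prop]
lemma measurable_besselI0 : Measurable besselI0 :=
  Measurable.tsum fun _ => by fun_prop

lemma besselI0_le_four_pow_mul_cosh_add (t : ℝ) (K : ℕ) :
    besselI0 t ≤ 4 ^ K * cosh (t / 2) + cosh t / √(2 * K + 1) := by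
  refine hasSum_le (fun k => ?_) (hasSum_besselI0 t)
    (((hasSum_cosh (t / 2)).mul_left (4 ^ K)).add ((hasSum_cosh t).div_const _))
  have hhead : 0 ≤ 4 ^ K * ((t / 2) ^ (2 * k) / (2 * k).factorial) :=
    mul_nonneg (by positivity) (pow_two_mul_div_factorial_nonneg _ k)
  have htail : 0 ≤ t ^ (2 * k) / (2 * k).factorial / √(2 * K + 1) :=
    div_nonneg (pow_two_mul_div_factorial_nonneg t k) (by positivity)
  rcases le_or_gt k K with hk | hk
  · linarith [besselI0_term_le_four_pow_mul (t := t) hk]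
  · have hsqrt : √(2 * K + 1) ≤ √(2 * k + 1) := by gcongr
    have hmono : t ^ (2 * k) / (2 * k).factorial / √(2 * k + 1) ≤
        t ^ (2 * k) / (2 * k).factorial / √(2 * K + 1) :=
      div_le_div_of_nonneg_left (pow_two_mul_div_factorial_nonneg t k) (by positivity) hsqrt
    linarith [besselI0_term_le_div_sqrt t k]

lemma Real.cosh_le_exp_of_nonneg {x : ℝ} (hx : 0 ≤ x) : cosh x ≤ exp x := by
  rw [cosh_eq]
  linarith [exp_le_exp.2 (show -x ≤ x by linarith)]

-- Splitting the series at `K = ⌊t/8⌋`: the head is small because `4 ^ K ≤ e^{t/4}`, the tail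
-- because its terms carry the factor `1 / √(2K + 1) = O(1 / √t)`.
lemma besselI0_mul_exp_neg_le_div_sqrt {t : ℝ} (ht : 0 < t) :
    besselI0 t * exp (-t) ≤ 4 / √t := by
  set K := ⌊t / 8⌋₊
  have hK : (K : ℝ) ≤ t / 8 := Nat.floor_le (by positivity)
  have hK' : t / 8 < K + 1 := Nat.lt_floor_add_one _
  have hsqrt_t : 0 < √t := Real.sqrt_pos.2 ht
  have hfour : (4 : ℝ) ^ K ≤ exp (t / 4) := by
    have h4 : (4 : ℝ) ≤ exp 2 := by
      rw [show (2 : ℝ) = 1 + 1 by norm_num, exp_add]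
      nlinarith [add_one_le_exp (1 : ℝ)]
    calc (4 : ℝ) ^ K ≤ exp 2 ^ K := by gcongr
      _ = exp (2 * K) := by rw [← exp_nat_mul]; ring_nf
      _ ≤ exp (t / 4) := exp_le_exp.2 (by linarith)
  -- `√t ≤ 1 + t / 4` is `(√t - 2)² ≥ 0`
  have hhead : 4 ^ K * cosh (t / 2) * exp (-t) ≤ 1 / √t := by
    have hroot : √t ≤ exp (t / 4) := by
      nlinarith [Real.sq_sqrt ht.le, sq_nonneg (√t - 2), add_one_le_exp (t / 4)]
    calc 4 ^ K * cosh (t / 2) * exp (-t) ≤ exp (t / 4) * exp (t / 2) * exp (-t) := by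
          gcongr; exact Real.cosh_le_exp_of_nonneg (by positivity)
      _ = 1 / exp (t / 4) := by rw [← exp_add, ← exp_add, one_div, ← exp_neg]; ring_nf
      _ ≤ 1 / √t := one_div_le_one_div_of_le hsqrt_t hroot
  have htail : cosh t / √(2 * K + 1) * exp (-t) ≤ 3 / √t := by
    have hroot : √t ≤ 3 * √(2 * K + 1) := by
      refine (pow_le_pow_iff_left₀ (Real.sqrt_nonneg _) (by positivity) two_ne_zero).1 ?_
      rw [mul_pow, Real.sq_sqrt ht.le, Real.sq_sqrt (by positivity)]
      linarith
    have hcosh : cosh t * exp (-t) ≤ 1 :=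
      calc cosh t * exp (-t) ≤ exp t * exp (-t) := by
            gcongr; exact Real.cosh_le_exp_of_nonneg ht.le
        _ = 1 := by rw [← exp_add, add_neg_cancel, exp_zero]
    calc cosh t / √(2 * K + 1) * exp (-t) = cosh t * exp (-t) / √(2 * K + 1) := by ring
      _ ≤ 1 / √(2 * K + 1) := by gcongr
      _ ≤ 3 / √t := by rw [div_le_div_iff₀ (by positivity) hsqrt_t]; linarith
  calc besselI0 t * exp (-t)
      ≤ (4 ^ K * cosh (t / 2) + cosh t / √(2 * K + 1)) * exp (-t) := by
        gcongr; exact besselI0_le_four_pow_mul_cosh_add t K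
    _ = 4 ^ K * cosh (t / 2) * exp (-t) + cosh t / √(2 * K + 1) * exp (-t) := add_mul _ _ _
    _ ≤ 1 / √t + 3 / √t := add_le_add hhead htail
    _ = 4 / √t := by ring

lemma besselI0_mul_exp_neg_le_one {t : ℝ} (ht : 0 ≤ t) : besselI0 t * exp (-t) ≤ 1 :=
  calc besselI0 t * exp (-t) ≤ exp t * exp (-t) := by
        gcongr; exact (besselI0_le_cosh t).trans (Real.cosh_le_exp_of_nonneg ht)
    _ = 1 := by rw [← exp_add, add_neg_cancel, exp_zero]

lemma integrableOn_besselI0_mul_exp_neg_pow {n : ℕ} (hn : 3 ≤ n) :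
    IntegrableOn (fun t => (besselI0 t * exp (-t)) ^ n) (Set.Ioi 0) := by
  have hmeas : AEStronglyMeasurable (fun t => (besselI0 t * exp (-t)) ^ n) volume :=
    (by fun_prop : Measurable fun t => (besselI0 t * exp (-t)) ^ n).aestronglyMeasurable
  have hnear : IntegrableOn (fun t => (besselI0 t * exp (-t)) ^ n) (Set.Ioc 0 1) := by
    refine Integrable.mono' (integrableOn_const (C := (1 : ℝ)) measure_Ioc_lt_top.ne)
      hmeas.restrict ?_
    filter_upwards [ae_restrict_mem measurableSet_Ioc] with t ht
    have h0 : 0 ≤ besselI0 t * exp (-t) := by have := besselI0_nonneg t; positivity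
    rw [norm_of_nonneg (by positivity)]
    exact pow_le_one₀ h0 (besselI0_mul_exp_neg_le_one ht.1.le)
  have hfar : IntegrableOn (fun t => (besselI0 t * exp (-t)) ^ n) (Set.Ioi 1) := by
    refine Integrable.mono' ((integrableOn_Ioi_rpow_of_lt (a := -(3 / 2)) (by norm_num)
      one_pos).const_mul 64) hmeas.restrict ?_
    filter_upwards [ae_restrict_mem measurableSet_Ioi] with t ht
    have ht0 : (0 : ℝ) < t := one_pos.trans ht
    have h0 : 0 ≤ besselI0 t * exp (-t) := by have := besselI0_nonneg t; positivity
    rw [norm_of_nonneg (by positivity)]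
    calc (besselI0 t * exp (-t)) ^ n ≤ (besselI0 t * exp (-t)) ^ 3 :=
          pow_le_pow_of_le_one h0 (besselI0_mul_exp_neg_le_one ht0.le) hn
      _ ≤ (4 / √t) ^ 3 := by gcongr; exact besselI0_mul_exp_neg_le_div_sqrt ht0
      _ = 64 * t ^ (-(3 / 2) : ℝ) := by
          have h32 : √t ^ 3 = t ^ (3 / 2 : ℝ) := by
            rw [Real.sqrt_eq_rpow, ← Real.rpow_mul_natCast ht0.le]; norm_num
          rw [div_pow, h32, Real.rpow_neg ht0.le]
          norm_num
          ring
  simpa only [Set.Ioc_union_Ioi_eq_Ioi zero_le_one] using hnear.union hfar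

lemma integrableOn_besselI0_div_pow_mul_exp_neg {d : ℕ} (hd : 3 ≤ d) :
    IntegrableOn (fun x : ℝ => besselI0 (x / d) ^ d * exp (-x)) (Set.Ioi 0) := by
  have hd0 : (0 : ℝ) < d := by exact_mod_cast (by omega : 0 < d)
  have h := (integrableOn_Ioi_comp_mul_left_iff
    (fun t => (besselI0 t * exp (-t)) ^ d) 0 (inv_pos.2 hd0)).2
    (by simpa using integrableOn_besselI0_mul_exp_neg_pow hd)
  refine h.congr_fun (fun x _ => ?_) measurableSet_Ioi
  dsimp only
  rw [mul_pow, ← exp_nat_mul, inv_mul_eq_div]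
  field_simp

lemma hasSum_pi_fin_prod {β : Type*} {f : β → ℝ} {a : ℝ} (hf : 0 ≤ f) (h : HasSum f a)
    (n : ℕ) : HasSum (fun k : Fin n → β => ∏ j, f (k j)) (a ^ n) := by
  induction n with
  | zero => simp
  | succ n ih =>
    have hg : 0 ≤ fun k : Fin n → β => ∏ j, f (k j) :=
      fun k => prod_nonneg fun j _ => hf (k j)
    have hs := Summable.mul_of_nonneg h.summable ih.summable hf hg
    rw [← (Fin.consEquiv fun _ => β).hasSum_iff, pow_succ']
    exact (h.mul ih hs).congr_fun fun p => by simp [Fin.consEquiv, Fin.prod_univ_succ]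

lemma hasSum_besselI0_pow (t : ℝ) (n : ℕ) :
    HasSum (fun k : Fin n → ℕ => (t / 2) ^ (2 * ∑ j, k j) / ∏ j, ((k j).factorial : ℝ) ^ 2)
      (besselI0 t ^ n) := by
  convert hasSum_pi_fin_prod (besselI0_term_nonneg t) (hasSum_besselI0 t) n using 2 with k
  rw [prod_div_distrib, mul_sum, prod_pow_eq_pow_sum]

lemma integral_pow_mul_exp_neg (m : ℕ) :
    ∫ x in Set.Ioi (0 : ℝ), x ^ m * exp (-x) = m.factorial := by
  rw [← Real.Gamma_nat_eq_factorial, Real.Gamma_eq_integral (by positivity)]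
  refine setIntegral_congr_fun measurableSet_Ioi fun x _ => ?_
  rw [add_sub_cancel_right, Real.rpow_natCast, mul_comm]

lemma ascPochhammer_eval_half (n : ℕ) :
    (ascPochhammer ℝ n).eval (1 / 2) = (2 * n).factorial / (4 ^ n * n.factorial) := by
  induction n with
  | zero => simp
  | succ n ih =>
    rw [ascPochhammer_succ_eval, ih, show 2 * (n + 1) = 2 * n + 1 + 1 by ring,
      Nat.factorial_succ, Nat.factorial_succ, Nat.factorial_succ]
    push_cast
    field_simp
    ring

lemma integral_div_div_two_pow_mul_exp_neg (a P : ℝ) (n : ℕ) :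
    ∫ x in Set.Ioi (0 : ℝ), (x / a / 2) ^ (2 * n) / P * exp (-x) =
      (ascPochhammer ℝ n).eval 1 * (ascPochhammer ℝ n).eval (1 / 2) / (P * a ^ (2 * n)) := by
  have hfun : (fun x : ℝ => (x / a / 2) ^ (2 * n) / P * exp (-x)) =
      fun x => ((a * 2) ^ (2 * n) * P)⁻¹ * (x ^ (2 * n) * exp (-x)) := by
    ext x; rw [div_div, div_pow]; ring
  rw [hfun, integral_const_mul, integral_pow_mul_exp_neg, ascPochhammer_eval_one,
    ascPochhammer_eval_half, mul_pow, pow_mul 2 2]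
  have : (n.factorial : ℝ) ≠ 0 := by positivity
  field_simp
  norm_num

lemma hasSum_integral_of_nonneg {α ι : Type*} [MeasurableSpace α] {μ : Measure α} [Countable ι]
    {F : ι → α → ℝ} {f : α → ℝ} (hF_meas : ∀ i, AEStronglyMeasurable (F i) μ)
    (hF_nonneg : ∀ i, 0 ≤ F i) (hF_sum : ∀ᵐ x ∂μ, HasSum (F · x) (f x))
    (hf : Integrable f μ) :
    HasSum (fun i => ∫ x, F i x ∂μ) (∫ x, f x ∂μ) :=
  hasSum_integral_of_dominated_convergence F hF_meas
    (fun i => ae_of_all _ fun x => (Real.norm_of_nonneg (hF_nonneg i x)).le)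
    (hF_sum.mono fun _ h => h.summable) (hf.congr (hF_sum.mono fun _ h => h.tsum_eq.symm))
    hF_sum

/-- For every integer `d ≥ 3`, `∫₀^∞ [I₀(x/d)]^d e^{-x} dx` equals the Lauricella series
`F_C^{(d)}(1, 1/2; 1, …, 1; 1/d², …, 1/d²)`, both sides being finite. -/
theorem integral_besselI0_pow_eq_lauricellaFC (d : ℕ) (hd : 3 ≤ d) :
    IntegrableOn (fun x : ℝ => (besselI0 (x / d)) ^ d * Real.exp (-x)) (Set.Ioi 0) ∧
    Summable (fun k : Fin d → ℕ =>
      (ascPochhammer ℝ (∑ j, k j)).eval 1 * (ascPochhammer ℝ (∑ j, k j)).eval (1 / 2) /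
        ((∏ j, ((k j).factorial : ℝ) ^ 2) * (d : ℝ) ^ (2 * ∑ j, k j))) ∧
    (∫ x in Set.Ioi (0 : ℝ), (besselI0 (x / d)) ^ d * Real.exp (-x)) =
      ∑' k : Fin d → ℕ,
        (ascPochhammer ℝ (∑ j, k j)).eval 1 * (ascPochhammer ℝ (∑ j, k j)).eval (1 / 2) /
          ((∏ j, ((k j).factorial : ℝ) ^ 2) * (d : ℝ) ^ (2 * ∑ j, k j)) := by
  have hint := integrableOn_besselI0_div_pow_mul_exp_neg hd
  have hsum := hasSum_integral_of_nonneg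
    (F := fun (k : Fin d → ℕ) (x : ℝ) =>
      (x / d / 2) ^ (2 * ∑ j, k j) / (∏ j, ((k j).factorial : ℝ) ^ 2) * exp (-x))
    (fun k => by fun_prop)
    (fun k x => mul_nonneg (div_nonneg ((even_two_mul _).pow_nonneg _)
      (prod_nonneg fun j _ => by positivity)) (exp_pos _).le)
    (ae_of_all _ fun x => (hasSum_besselI0_pow (x / d) d).mul_right (exp (-x))) hint
  simp only [integral_div_div_two_pow_mul_exp_neg] at hsum
  exact ⟨hint, hsum.summable, hsum.tsum_eq.symm⟩
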